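/- For every integer k ≥ 1, the formal power series (1/(q;q)_∞) · ∑_{j ∉ [−k,k−1]} (−1)^{j+k} q^{j(3j+1)/2} has all coefficients nonnegative, where the sum is over integers j < −k or j > k−1. -/

import Mathlib

/-!
Write `ω(j) = j(3j-1)/2` and let `N_{≥m}(N)` count the partitions of `N` whose rank (largest part
minus number of parts) is at least `m`. Dyson's bijection gives
`N_{≥m}(N + m + 1) = N_{≤m+2}(N) = p(N) - N_{≥m+3}(N)`, so the alternating sums
`∑ᵢ (-1)^i p(n - ω(-(k+i)))` and `∑ᵢ (-1)^i p(n - ω(k+1+i))` coming from the two halves of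
the tail telescope, and the `n`-th coefficient equals
`N_{≥3k-2}(n - ω(1-k)) - N_{≥3k}(n - ω(k))`. Since `ω(k) - ω(1-k) = 2k - 1`, adding `2k - 1` to
the largest part injects the partitions counted by the second term into those counted by the first.
-/

open Finset

namespace Multiset

variable {α : Type*}

lemma sup_mem_of_ne_zero [LinearOrder α] [OrderBot α] {s : Multiset α} (hs : s ≠ 0) :
    s.sup ∈ s := by
  induction s using Multiset.induction_on with
  | empty => exact absurd rfl hs
  | cons a t ih =>
    rw [sup_cons]
    rcases eq_or_ne t 0 with rfl | ht
    · simp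
    · rcases max_choice a t.sup with h | h <;> rw [h]
      · exact mem_cons_self _ _
      · exact mem_cons_of_mem (ih ht)

lemma sup_cons_of_forall_le [SemilatticeSup α] [OrderBot α] {a : α} {s : Multiset α}
    (h : ∀ x ∈ s, x ≤ a) : (a ::ₘ s).sup = a := by
  rw [sup_cons, sup_eq_left, Multiset.sup_le]
  exact h

def raiseParts (u : Multiset ℕ) (t : ℕ) : Multiset ℕ := u.map (· + 1) + replicate t 1

def lowerParts (w : Multiset ℕ) : Multiset ℕ := (w.filter (2 ≤ ·)).map (· - 1)

@[simp] lemma card_raiseParts (u : Multiset ℕ) (t : ℕ) :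
    card (raiseParts u t) = card u + t := by
  simp [raiseParts]

@[simp] lemma sum_raiseParts (u : Multiset ℕ) (t : ℕ) :
    (raiseParts u t).sum = u.sum + card u + t := by
  simp [raiseParts, sum_map_add]

lemma pos_of_mem_raiseParts {u : Multiset ℕ} {t x : ℕ} (hx : x ∈ raiseParts u t) : 0 < x := by
  rcases mem_add.1 hx with hx | hx
  · obtain ⟨y, -, rfl⟩ := mem_map.1 hx
    exact y.succ_pos
  · rw [eq_of_mem_replicate hx]
    exact one_pos

lemma pos_of_mem_lowerParts {w : Multiset ℕ} {x : ℕ} (hx : x ∈ lowerParts w) : 0 < x := by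
  obtain ⟨y, hy, rfl⟩ := mem_map.1 hx
  have := (mem_filter.1 hy).2
  omega

lemma sup_raiseParts_le {u : Multiset ℕ} {t a : ℕ} (h : ∀ x ∈ u, x ≤ a) :
    (raiseParts u t).sup ≤ a + 1 := by
  refine Multiset.sup_le.2 fun x hx => ?_
  rcases mem_add.1 hx with hx | hx
  · obtain ⟨y, hy, rfl⟩ := mem_map.1 hx
    exact Nat.succ_le_succ (h y hy)
  · rw [eq_of_mem_replicate hx]
    omega

lemma raiseParts_lowerParts {w : Multiset ℕ} (hw : ∀ x ∈ w, 0 < x) :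
    raiseParts (lowerParts w) (count 1 w) = w := by
  have hmap : (lowerParts w).map (· + 1) = w.filter (2 ≤ ·) := by
    rw [lowerParts, map_map]
    refine (map_congr rfl fun x hx => ?_).trans (map_id _)
    have := (mem_filter.1 hx).2
    simp only [Function.comp_apply, id_eq]
    omega
  have hones : w.filter (fun x => ¬ 2 ≤ x) = replicate (count 1 w) 1 := by
    rw [← filter_eq']
    refine filter_congr fun x hx => ?_
    have := hw x hx
    omega
  rw [raiseParts, hmap, ← hones, filter_add_not]

lemma lowerParts_raiseParts {u : Multiset ℕ} (hu : ∀ x ∈ u, 0 < x) (t : ℕ) :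
    lowerParts (raiseParts u t) = u := by
  have hbig : (u.map (· + 1)).filter (2 ≤ ·) = u.map (· + 1) := by
    refine filter_eq_self.2 fun x hx => ?_
    obtain ⟨y, hy, rfl⟩ := mem_map.1 hx
    have := hu y hy
    omega
  have hsmall : (replicate t 1).filter (2 ≤ ·) = 0 :=
    filter_eq_nil.2 fun x hx => by rw [eq_of_mem_replicate hx]; omega
  rw [lowerParts, raiseParts, filter_add, hbig, hsmall, add_zero, map_map]
  exact (map_congr rfl fun x _ => by simp).trans (map_id _)

lemma card_eq_card_lowerParts_add_count_one {w : Multiset ℕ} (hw : ∀ x ∈ w, 0 < x) :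
    card w = card (lowerParts w) + count 1 w := by
  conv_lhs => rw [← raiseParts_lowerParts hw]
  exact card_raiseParts _ _

end Multiset

namespace Nat.Partition

open Multiset

variable {n : ℕ}

def rank (l : n.Partition) : ℤ := l.parts.sup - card l.parts

def rankGE (m : ℤ) (n : ℕ) : Finset n.Partition := {l | m ≤ l.rank}

lemma parts_ne_zero (l : n.Partition) (hn : n ≠ 0) : l.parts ≠ 0 := fun h =>
  hn (by rw [← l.parts_sum, h, sum_zero])

lemma parts_ne_zero_of_rank_pos {l : n.Partition} (h : 0 < l.rank) : l.parts ≠ 0 := by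
  rintro h0
  simp [rank, h0] at h

lemma sup_cons_erase_sup {l : n.Partition} (h : l.parts ≠ 0) :
    l.parts.sup ::ₘ l.parts.erase l.parts.sup = l.parts :=
  cons_erase (sup_mem_of_ne_zero h)

lemma sup_add_sum_erase_sup (l : n.Partition) :
    l.parts.sup + (l.parts.erase l.parts.sup).sum = n := by
  rcases eq_or_ne l.parts 0 with h | h
  · simpa [h] using l.parts_sum
  · rw [← Multiset.sum_cons, sup_cons_erase_sup h, l.parts_sum]

lemma rank_eq_sup_sub_card_erase_sup {l : n.Partition} (h : l.parts ≠ 0) :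
    l.rank = l.parts.sup - (card (l.parts.erase l.parts.sup) + 1) := by
  have hcard := congrArg Multiset.card (sup_cons_erase_sup h)
  rw [Multiset.card_cons] at hcard
  rw [rank, ← hcard]
  push_cast
  ring

lemma rank_lt (l : n.Partition) (hn : n ≠ 0) : l.rank < n := by
  have hsup : l.parts.sup ≤ n := Multiset.sup_le.2 fun _ => le_of_mem_parts
  have hcard : 0 < card l.parts := Multiset.card_pos.2 (l.parts_ne_zero hn)
  rw [rank]
  omega

lemma card_rankGE_eq_zero {m : ℤ} (hm : 1 ≤ m) (hn : n ≤ m) : #(rankGE m n) = 0 := by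
  refine Finset.card_eq_zero.2 (filter_eq_empty_iff.2 fun l _ => not_le.2 ?_)
  rcases eq_or_ne n 0 with rfl | hn0
  · rw [rank, partition_zero_parts, Multiset.sup_zero, Multiset.card_zero]
    simp only [Nat.bot_eq_zero, Nat.cast_zero, sub_self]
    omega
  · exact (l.rank_lt hn0).trans_le hn

section Dyson

variable {N : ℕ} (m : ℕ)

def dysonAdjoin (w : N.Partition) : (N + m + 1).Partition where
  parts := (card w.parts + m + 1) ::ₘ lowerParts w.parts
  parts_pos hx := by
    rcases mem_cons.1 hx with rfl | hx
    · omega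
    · exact pos_of_mem_lowerParts hx
  parts_sum := by
    have h := congrArg sum (raiseParts_lowerParts fun _ => w.parts_pos)
    rw [sum_raiseParts, w.parts_sum] at h
    rw [Multiset.sum_cons, card_eq_card_lowerParts_add_count_one fun _ => w.parts_pos]
    omega

def dysonRemove (l : (N + m + 1).Partition) (hl : (m : ℤ) ≤ l.rank) : N.Partition where
  parts := raiseParts (l.parts.erase l.parts.sup)
    (l.parts.sup - (m + 1 + card (l.parts.erase l.parts.sup)))
  parts_pos := pos_of_mem_raiseParts
  parts_sum := by
    have hne := l.parts_ne_zero (by omega)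
    have hsum := l.sup_add_sum_erase_sup
    have hrank := rank_eq_sup_sub_card_erase_sup hne
    rw [sum_raiseParts]
    omega

variable {m}

lemma sup_dysonAdjoin {w : N.Partition} (hw : w.rank ≤ m + 2) :
    (dysonAdjoin m w).parts.sup = card w.parts + m + 1 := by
  refine sup_cons_of_forall_le fun x hx => ?_
  obtain ⟨y, hy, rfl⟩ := mem_map.1 hx
  have hy : y ≤ w.parts.sup := le_sup (mem_filter.1 hy).1
  rw [rank] at hw
  omega

lemma le_rank_dysonAdjoin {w : N.Partition} (hw : w.rank ≤ m + 2) :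
    (m : ℤ) ≤ (dysonAdjoin m w).rank := by
  have hcard := card_eq_card_lowerParts_add_count_one fun _ => w.parts_pos
  rw [rank, sup_dysonAdjoin hw]
  simp only [dysonAdjoin, Multiset.card_cons]
  push_cast
  omega

lemma rank_dysonRemove_le {l : (N + m + 1).Partition} (hl : (m : ℤ) ≤ l.rank) :
    (dysonRemove m l hl).rank ≤ m + 2 := by
  have hsup : (dysonRemove m l hl).parts.sup ≤ l.parts.sup + 1 :=
    sup_raiseParts_le fun _ hx => le_sup (mem_of_mem_erase hx)
  have hcard : card (dysonRemove m l hl).parts = card (l.parts.erase l.parts.sup) +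
      (l.parts.sup - (m + 1 + card (l.parts.erase l.parts.sup))) :=
    card_raiseParts _ _
  have hrank := rank_eq_sup_sub_card_erase_sup (l.parts_ne_zero (by omega))
  rw [rank]
  omega

lemma dysonAdjoin_dysonRemove {l : (N + m + 1).Partition} (hl : (m : ℤ) ≤ l.rank) :
    dysonAdjoin m (dysonRemove m l hl) = l := by
  have hne := l.parts_ne_zero (by omega)
  have hrank := rank_eq_sup_sub_card_erase_sup hne
  ext1
  simp only [dysonAdjoin, dysonRemove]
  rw [card_raiseParts,
    lowerParts_raiseParts fun _ hx => l.parts_pos (mem_of_mem_erase hx)]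
  conv_rhs => rw [← sup_cons_erase_sup hne]
  congr 1
  omega

lemma dysonRemove_dysonAdjoin {w : N.Partition} (hw : w.rank ≤ m + 2)
    (h : (m : ℤ) ≤ (dysonAdjoin m w).rank) : dysonRemove m (dysonAdjoin m w) h = w := by
  have hcard := card_eq_card_lowerParts_add_count_one fun _ => w.parts_pos
  ext1
  dsimp only [dysonRemove]
  rw [sup_dysonAdjoin hw]
  simp only [dysonAdjoin, erase_cons_head]
  conv_rhs => rw [← raiseParts_lowerParts fun _ => w.parts_pos]
  congr 1
  omega

theorem card_rankGE_add_eq_card_rank_le :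
    #(rankGE m (N + m + 1)) = #{w : N.Partition | w.rank ≤ m + 2} :=
  card_bij' (fun l hl => dysonRemove m l (mem_filter.1 hl).2) (fun w _ => dysonAdjoin m w)
    (fun _ _ => mem_filter.2 ⟨mem_univ _, rank_dysonRemove_le _⟩)
    (fun _ hw => mem_filter.2 ⟨mem_univ _, le_rank_dysonAdjoin (mem_filter.1 hw).2⟩)
    (fun _ _ => dysonAdjoin_dysonRemove _)
    (fun _ hw => dysonRemove_dysonAdjoin (mem_filter.1 hw).2 _)

end Dyson

lemma card_rank_le_add_card_rankGE (a : ℤ) (n : ℕ) :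
    #{l : n.Partition | l.rank ≤ a} + #(rankGE (a + 1) n) = Fintype.card n.Partition := by
  have : univ.filter (fun l : n.Partition => l.rank ≤ a) = univ.filter (¬ a + 1 ≤ ·.rank) :=
    filter_congr fun _ _ => by omega
  rw [this, add_comm, rankGE, card_filter_add_card_filter_not, Finset.card_univ]

section GrowLargestPart

variable {N : ℕ} (d : ℕ)

def growLargestPart (l : N.Partition) : (N + d + 1).Partition where
  parts := (l.parts.sup + d + 1) ::ₘ l.parts.erase l.parts.sup
  parts_pos hx := by
    rcases mem_cons.1 hx with rfl | hx
    · omega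
    · exact l.parts_pos (mem_of_mem_erase hx)
  parts_sum := by
    have := l.sup_add_sum_erase_sup
    rw [Multiset.sum_cons]
    omega

variable {d}

lemma sup_growLargestPart (l : N.Partition) :
    (growLargestPart d l).parts.sup = l.parts.sup + d + 1 :=
  sup_cons_of_forall_le fun _ hx => (le_sup (mem_of_mem_erase hx)).trans (by omega)

lemma rank_growLargestPart {l : N.Partition} (h : l.parts ≠ 0) :
    (growLargestPart d l).rank = l.rank + d + 1 := by
  rw [rank, sup_growLargestPart, rank_eq_sup_sub_card_erase_sup h]
  simp only [growLargestPart, Multiset.card_cons]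
  push_cast
  ring

lemma growLargestPart_injOn : Set.InjOn (growLargestPart (N := N) d) {l | l.parts ≠ 0} := by
  intro l₁ h₁ l₂ h₂ heq
  have hsup : l₁.parts.sup = l₂.parts.sup := by
    have := congrArg (fun l => l.parts.sup) heq
    simp only [sup_growLargestPart] at this
    omega
  have herase : l₁.parts.erase l₂.parts.sup = l₂.parts.erase l₂.parts.sup := by
    simpa only [growLargestPart, hsup, cons_inj_right] using congrArg Nat.Partition.parts heq
  ext1
  rw [← sup_cons_erase_sup h₁, ← sup_cons_erase_sup h₂, hsup, herase]

theorem card_rankGE_le_card_rankGE_add {m m' : ℤ} (hm : 1 ≤ m) (hm' : m' ≤ m + d + 1)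
    (N : ℕ) : #(rankGE m N) ≤ #(rankGE m' (N + d + 1)) := by
  have hne : ∀ l ∈ rankGE m N, l.parts ≠ 0 := fun l hl =>
    parts_ne_zero_of_rank_pos (by have := (mem_filter.1 hl).2; omega)
  refine card_le_card_of_injOn (growLargestPart d) (fun l hl => ?_)
    (growLargestPart_injOn.mono fun l hl => hne l hl)
  have hrank := (mem_filter.1 hl).2
  refine mem_filter.2 ⟨mem_univ _, ?_⟩
  rw [rank_growLargestPart (hne l hl)]
  omega

end GrowLargestPart

end Nat.Partition

def extendByZero (a : ℕ → ℕ) (x : ℤ) : ℤ := if 0 ≤ x then a x.toNat else 0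

section ExtendByZero

variable (a : ℕ → ℕ)

@[simp] lemma extendByZero_natCast (n : ℕ) : extendByZero a n = a n := by
  simp [extendByZero]

lemma extendByZero_of_neg {x : ℤ} (hx : x < 0) : extendByZero a x = 0 :=
  if_neg hx.not_ge

lemma extendByZero_nonneg (x : ℤ) : 0 ≤ extendByZero a x := by
  unfold extendByZero
  split_ifs <;> positivity

theorem sum_range_mul_ite_eq (g n : ℕ) (t : ℤ) :
    ∑ m ∈ range (n + 1), (a m : ℤ) * (if g = n - m then t else 0) =
      t * extendByZero a (n - g) := by
  rcases lt_or_ge n g with hgn | hgn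
  · rw [extendByZero_of_neg _ (by omega), mul_zero]
    refine sum_eq_zero fun m _ => ?_
    rw [if_neg (by omega), mul_zero]
  · have hiff : ∀ m ∈ range (n + 1), g = n - m ↔ m = n - g := fun m hm => by
      rw [mem_range] at hm
      omega
    simp_rw [mul_ite, mul_zero]
    rw [sum_congr rfl fun m hm => if_congr (hiff m hm) rfl rfl, sum_ite_eq', if_pos (by simp),
      show (n : ℤ) - g = ((n - g : ℕ) : ℤ) by omega, extendByZero_natCast, mul_comm]

theorem sum_mul_tsum_ite_eq_sum {G : ℤ → ℕ} {T : ℤ → ℤ} {n : ℕ} {U : Finset ℤ}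
    (hU : ∀ j, T j ≠ 0 → G j ≤ n → j ∈ U) :
    ∑ m ∈ range (n + 1), (a m : ℤ) * ∑' j, (if G j = n - m then T j else 0) =
      ∑ j ∈ U, T j * extendByZero a (n - G j) := by
  have hfin : ∀ m ∈ range (n + 1), ∑' j, (if G j = n - m then T j else 0) =
      ∑ j ∈ U, if G j = n - m then T j else 0 := fun m _ =>
    tsum_eq_sum fun j hj => by
      split_ifs with hGj
      · by_contra hT
        exact hj (hU j hT (by omega))
      · rfl
  rw [sum_congr rfl fun m hm => by rw [hfin m hm]]
  simp_rw [mul_sum]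
  rw [sum_comm]
  exact sum_congr rfl fun j _ => sum_range_mul_ite_eq a (G j) n (T j)

end ExtendByZero

open Nat.Partition

def partitionCount : ℤ → ℤ := extendByZero fun n => Fintype.card n.Partition

def rankGECount (m : ℤ) : ℤ → ℤ := extendByZero fun n => #(rankGE m n)

theorem rankGECount_eq {m : ℤ} (hm : 1 ≤ m) (x : ℤ) :
    rankGECount m x = partitionCount (x - m - 1) - rankGECount (m + 3) (x - m - 1) := by
  lift m to ℕ using by omega
  rcases lt_or_ge (x - m - 1) 0 with hx | hx
  · rw [partitionCount, rankGECount, rankGECount, extendByZero_of_neg _ hx,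
      extendByZero_of_neg _ hx, sub_zero]
    rcases lt_or_ge x 0 with hx0 | hx0
    · exact extendByZero_of_neg _ hx0
    · lift x to ℕ using hx0
      rw [extendByZero_natCast, card_rankGE_eq_zero hm (by omega), Nat.cast_zero]
  · lift x - m - 1 to ℕ using hx with N hN
    obtain rfl : x = ((N + m + 1 : ℕ) : ℤ) := by push_cast; omega
    have hsplit := card_rank_le_add_card_rankGE ((m : ℤ) + 2) N
    rw [show (m : ℤ) + 2 + 1 = m + 3 by ring] at hsplit
    rw [partitionCount, rankGECount, rankGECount, extendByZero_natCast, extendByZero_natCast,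
      extendByZero_natCast, card_rankGE_add_eq_card_rank_le, ← hsplit]
    push_cast
    ring

theorem rankGECount_le_rankGECount_add {m m' : ℤ} {d : ℕ} (hm : 1 ≤ m) (hm' : m' ≤ m + d + 1)
    (x : ℤ) : rankGECount m x ≤ rankGECount m' (x + d + 1) := by
  rcases lt_or_ge x 0 with hx | hx
  · rw [rankGECount, extendByZero_of_neg _ hx]
    exact extendByZero_nonneg _ _
  · lift x to ℕ using hx
    rw [rankGECount, rankGECount,
      show (x : ℤ) + d + 1 = ((x + d + 1 : ℕ) : ℤ) by push_cast; ring,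
      extendByZero_natCast, extendByZero_natCast]
    exact_mod_cast card_rankGE_le_card_rankGE_add hm hm' x

theorem sum_range_alternating_partitionCount {m : ℤ} (hm : 1 ≤ m) {f : ℕ → ℤ}
    (hf : ∀ i, f (i + 1) = f i + m + 3 * i + 1) {x : ℤ} {B : ℕ} (hB : x < f B) :
    ∑ i ∈ range B, (-1) ^ i * partitionCount (x - f (i + 1)) = rankGECount m (x - f 0) := by
  induction B generalizing m f with
  | zero => rw [sum_range_zero, rankGECount, extendByZero_of_neg _ (by omega)]
  | succ B ih =>
    have htail := ih (m := m + 3) (f := fun i => f (i + 1)) (by omega)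
      (fun i => by rw [hf (i + 1)]; push_cast; ring) hB
    rw [sum_range_succ', rankGECount_eq hm, show x - f 0 - m - 1 = x - f (0 + 1) by
      rw [hf 0]; ring, ← htail]
    simp only [pow_succ, mul_neg_one, neg_mul, sum_neg_distrib, pow_zero, one_mul]
    ring

lemma natCast_pentagonal_neg (j : ℤ) : (pentagonal (-j) : ℤ) = j * (3 * j + 1) / 2 := by
  rw [natCast_pentagonal]
  congr 1
  ring

lemma natCast_pentagonal_sub_one (j : ℤ) :
    (pentagonal (j - 1) : ℤ) = pentagonal j - 3 * j + 2 := by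
  linarith [two_mul_natCast_pentagonal (j - 1), two_mul_natCast_pentagonal j]

lemma natCast_pentagonal_one_sub (j : ℤ) :
    (pentagonal (1 - j) : ℤ) = pentagonal j - 2 * j + 1 := by
  linarith [two_mul_natCast_pentagonal (1 - j), two_mul_natCast_pentagonal j]

lemma abs_le_natCast_pentagonal (j : ℤ) : |j| ≤ pentagonal j := by
  have h := two_mul_natCast_pentagonal j
  rcases abs_cases j with ⟨hj, -⟩ | ⟨hj, -⟩ <;> rw [hj] <;> nlinarith

def tailSign (k : ℕ) (j : ℤ) : ℤ :=
  if j < -(k : ℤ) ∨ (k : ℤ) ≤ j then (-1) ^ (j + k).natAbs else 0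

section TailSign

variable {k : ℕ}

lemma tailSign_natCast_add (i : ℕ) : tailSign k (k + i) = (-1) ^ i := by
  rw [tailSign, if_pos (Or.inr (by omega)), show ((k : ℤ) + i + k).natAbs = i + 2 * k by omega,
    pow_add, pow_mul, neg_one_sq, one_pow, mul_one]

lemma tailSign_neg_sub_one_sub (i : ℕ) : tailSign k (-k - 1 - i) = -(-1) ^ i := by
  rw [tailSign, if_pos (Or.inl (by omega)), show (-(k : ℤ) - 1 - i + k).natAbs = i + 1 by omega,
    pow_succ, mul_neg_one]

lemma ite_tail_eq_ite_pentagonal (j : ℤ) (v : ℕ) :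
    (if (j < -(k : ℤ) ∨ (k : ℤ) ≤ j) ∧ j * (3 * j + 1) / 2 = v
      then (-1 : ℤ) ^ (j + k).natAbs else 0) =
      if pentagonal (-j) = v then tailSign k j else 0 := by
  simp only [← natCast_pentagonal_neg, Nat.cast_inj, tailSign]
  split_ifs <;> tauto

lemma mem_tail_of_pentagonal_le {n : ℕ} {j : ℤ} (hj : tailSign k j ≠ 0)
    (hjn : pentagonal (-j) ≤ n) :
    j ∈ (range (n + 1)).image (fun i : ℕ => (k : ℤ) + i) ∪
      (range (n + 1)).image (fun i : ℕ => -(k : ℤ) - 1 - i) := by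
  have habs : |j| ≤ n := by
    simpa only [abs_neg] using (abs_le_natCast_pentagonal (-j)).trans (Nat.cast_le.2 hjn)
  have htail : j < -(k : ℤ) ∨ (k : ℤ) ≤ j := by
    by_contra h
    exact hj (if_neg h)
  rcases htail with htail | htail
  · refine mem_union_right _ (mem_image.2 ⟨(-(k : ℤ) - 1 - j).toNat, ?_, by omega⟩)
    rw [abs_of_neg (by omega)] at habs
    rw [mem_range]
    omega
  · refine mem_union_left _ (mem_image.2 ⟨(j - k).toNat, ?_, by omega⟩)
    rw [abs_of_nonneg (by omega)] at habs
    rw [mem_range]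
    omega

theorem sum_alternating_partitionCount_pentagonal_neg (hk : 1 ≤ k) (n : ℕ) :
    ∑ i ∈ range (n + 1), (-1) ^ i * partitionCount (n - pentagonal (-(k + i))) =
      rankGECount (3 * k - 2) (n - pentagonal (1 - k)) := by
  have h := sum_range_alternating_partitionCount (m := 3 * k - 2) (by omega)
    (f := fun i => pentagonal (1 - k - i)) (x := n) (B := n + 1)
    (fun i => by
      push_cast
      rw [show 1 - (k : ℤ) - (i + 1) = 1 - k - i - 1 by ring, natCast_pentagonal_sub_one]
      ring)
    (by
      have := abs_le_natCast_pentagonal (1 - k - ((n + 1 : ℕ) : ℤ))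
      rw [abs_of_neg (by omega)] at this
      omega)
  simp only [Nat.cast_zero, sub_zero] at h
  rw [← h]
  refine sum_congr rfl fun i _ => ?_
  push_cast
  ring_nf

theorem sum_alternating_partitionCount_pentagonal (hk : 1 ≤ k) (n : ℕ) :
    ∑ i ∈ range (n + 1), (-1) ^ i * partitionCount (n - pentagonal (k + 1 + i)) =
      rankGECount (3 * k) (n - pentagonal k) := by
  have h := sum_range_alternating_partitionCount (m := 3 * k) (by omega)
    (f := fun i => pentagonal (k + i)) (x := n) (B := n + 1)
    (fun i => by
      push_cast
      rw [show (k : ℤ) + i = k + (i + 1) - 1 by ring, natCast_pentagonal_sub_one]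
      ring)
    (by
      have := abs_le_natCast_pentagonal (k + ((n + 1 : ℕ) : ℤ))
      rw [abs_of_pos (by omega)] at this
      omega)
  simp only [Nat.cast_zero, add_zero] at h
  rw [← h]
  refine sum_congr rfl fun i _ => ?_
  push_cast
  ring_nf

theorem sum_partition_mul_tail_coeff_eq (hk : 1 ≤ k) (n : ℕ) :
    ∑ m ∈ range (n + 1), (Fintype.card (Nat.Partition m) : ℤ) *
        ∑' j : ℤ, (if (j < -(k : ℤ) ∨ (k : ℤ) ≤ j) ∧ j * (3 * j + 1) / 2 = ((n - m : ℕ) : ℤ)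
          then (-1 : ℤ) ^ (j + k).natAbs else 0) =
      rankGECount (3 * k - 2) (n - pentagonal (1 - k)) -
        rankGECount (3 * k) (n - pentagonal k) := by
  have hdisj : Disjoint ((range (n + 1)).image fun i : ℕ => (k : ℤ) + i)
      ((range (n + 1)).image fun i : ℕ => -(k : ℤ) - 1 - i) := by
    simp only [disjoint_left, mem_image]
    rintro _ ⟨i, -, rfl⟩ ⟨i', -, h⟩
    omega
  simp_rw [ite_tail_eq_ite_pentagonal]
  rw [sum_mul_tsum_ite_eq_sum _ fun _ => mem_tail_of_pentagonal_le, sum_union hdisj,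
    sum_image fun _ _ _ _ h => by simpa using h, sum_image fun _ _ _ _ h => by omega,
    ← sum_alternating_partitionCount_pentagonal_neg hk,
    ← sum_alternating_partitionCount_pentagonal hk]
  simp only [tailSign_natCast_add, tailSign_neg_sub_one_sub, neg_mul, sum_neg_distrib,
    ← sub_eq_add_neg, partitionCount]
  congr 1
  refine sum_congr rfl fun i _ => ?_
  congr 5
  ring

end TailSign

/-- For `k ≥ 1`, the series `(1/(q;q)_∞) ∑_{j ∉ [-k,k-1]} (-1)^{j+k} q^{j(3j+1)/2}`
has nonnegative coefficients; the `n`-th coefficient is written as a convolution of the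
partition numbers with the coefficients of the tail sum. -/
theorem truncated_pentagonal_nonneg (k : ℕ) (hk : 1 ≤ k) (n : ℕ) :
    0 ≤ ∑ m ∈ Finset.range (n + 1),
      (Fintype.card (Nat.Partition m) : ℤ) *
        ∑' j : ℤ, if (j < -(k : ℤ) ∨ (k : ℤ) ≤ j) ∧ j * (3 * j + 1) / 2 = ((n - m : ℕ) : ℤ)
          then (-1 : ℤ) ^ (j + k).natAbs else 0 := by
  rw [sum_partition_mul_tail_coeff_eq hk n, sub_nonneg]
  convert rankGECount_le_rankGECount_add (m := 3 * k) (m' := 3 * k - 2) (d := 2 * k - 2)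
    (by omega) (by omega) (n - pentagonal k) using 2
  rw [natCast_pentagonal_one_sub]
  omega
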